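/- Let n ≥ 1. The set { φ ∈ [−π/2, π/2] : A_n(iφ) = 0 } is finite. -/

import Mathlib

/-!
On the strip `|Im ζ| < π` the function `sinh ζ / ζ` stays off the closed negative real axis: for
`|Im ζ| ≤ π/2` its real part is positive, and beyond that its imaginary part vanishes only on the
imaginary axis, where the real part is positive. Hence `ζ ↦ (sinh ζ / ζ)^{1/2} cosh ζ` is
holomorphic there and grows like `exp (3/2 |Re ζ|)`, which the weight
`(cosh λ)^{-n-3/2} = O(exp (-(n + 3/2) |λ|))` dominates, so `A_n` is holomorphic on that strip.
The strip contains the segment `i [-π/2, π/2]` in its interior, and `A_n(0) > 0`; by the identity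
theorem the zeros of `A_n` are isolated, so only finitely many lie on the compact segment.
-/

open MeasureTheory Topology Filter Set

noncomputable section

/-- `sinh(ζ)/ζ`, extended by `1` at `ζ = 0`. -/
def sinhc (z : ℂ) : ℂ := if z = 0 then 1 else Complex.sinh z / z

/-- `A_n(w) = ∫_ℝ (sinh(λ+w)/(λ+w))^{1/2} cosh(λ+w) (cosh λ)^{−n−3/2} dλ`
(principal branch powers). -/
def An (n : ℕ) (w : ℂ) : ℂ :=
  ∫ l : ℝ, sinhc (l + w) ^ ((1 : ℂ) / 2) * Complex.cosh (l + w) *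
    Complex.cosh (l : ℂ) ^ (-(n : ℂ) - 3 / 2)

/-- `B_n(w) = ∫_ℝ (λ+w)(sinh(λ+w)/(λ+w))^{3/2} (cosh λ)^{−n−3/2} dλ`
(principal branch powers). -/
def Bn (n : ℕ) (w : ℂ) : ℂ :=
  ∫ l : ℝ, ((l : ℂ) + w) * sinhc (l + w) ^ ((3 : ℂ) / 2) *
    Complex.cosh (l : ℂ) ^ (-(n : ℂ) - 3 / 2)

/-- `sinh λ / λ` for real `λ`, extended by `1` at `λ = 0`. -/
def shc (l : ℝ) : ℝ := if l = 0 then 1 else Real.sinh l / l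

def horizontalStrip (a b : ℝ) : Set ℂ := Complex.im ⁻¹' Ioo a b

lemma isOpen_horizontalStrip (a b : ℝ) : IsOpen (horizontalStrip a b) :=
  isOpen_Ioo.preimage Complex.continuous_im

lemma convex_horizontalStrip (a b : ℝ) : Convex ℝ (horizontalStrip a b) :=
  (convex_Ioo a b).linear_preimage Complex.imLm

lemma ofReal_add_mem_horizontalStrip {a b : ℝ} {w : ℂ} (hw : w ∈ horizontalStrip a b) (l : ℝ) :
    (l : ℂ) + w ∈ horizontalStrip a b := by
  simpa [horizontalStrip] using hw

lemma closedBall_subset_horizontalStrip {a b r : ℝ} {z : ℂ} (ha : a < z.im - r)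
    (hb : z.im + r < b) : Metric.closedBall z r ⊆ horizontalStrip a b := by
  intro ξ hξ
  have h := (Complex.abs_im_le_norm (ξ - z)).trans (mem_closedBall_iff_norm.1 hξ)
  rw [Complex.sub_im, abs_le] at h
  exact ⟨by linarith, by linarith⟩

lemma abs_re_le_of_norm_sub_le {z w : ℂ} {r : ℝ} (h : ‖w - z‖ ≤ r) : |w.re| ≤ |z.re| + r := by
  have := (Complex.abs_re_le_norm (w - z)).trans h
  rw [Complex.sub_re] at this
  linarith [abs_sub_abs_le_abs_sub w.re z.re]

lemma exp_mul_abs_add_le {k : ℝ} (hk : 0 ≤ k) (u v : ℝ) :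
    Real.exp (k * |u + v|) ≤ Real.exp (k * |u|) * Real.exp (k * |v|) := by
  rw [← Real.exp_add, ← mul_add]
  gcongr
  exact abs_add_le u v

section IntegralOfTranslates

variable {a b k M : ℝ} {G : ℂ → ℂ} {c : ℝ → ℂ}
  (hG : DifferentiableOn ℂ G (horizontalStrip a b))
  (hGb : ∀ z ∈ horizontalStrip a b, ‖G z‖ ≤ M * Real.exp (k * |z.re|)) (hk : 0 ≤ k)
include hG hGb hk

lemma norm_deriv_le_of_norm_le_exp
    {z : ℂ} {r : ℝ} (hr : 0 < r) (hzr : Metric.closedBall z r ⊆ horizontalStrip a b) :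
    ‖deriv G z‖ ≤ M * Real.exp (k * (|z.re| + r)) / r := by
  refine Complex.norm_deriv_le_of_forall_mem_sphere_norm_le hr ?_ fun ξ hξ => ?_
  · exact (hG.mono (closure_ball z hr.ne' ▸ hzr)).diffContOnCl
  · have hξS := hzr (Metric.sphere_subset_closedBall hξ)
    have hM : 0 ≤ M := nonneg_of_mul_nonneg_left ((norm_nonneg _).trans (hGb ξ hξS))
      (Real.exp_pos _)
    calc ‖G ξ‖ ≤ M * Real.exp (k * |ξ.re|) := hGb ξ hξS
      _ ≤ M * Real.exp (k * (|z.re| + r)) := by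
        gcongr
        exact abs_re_le_of_norm_sub_le (mem_sphere_iff_norm.1 hξ).le

lemma norm_deriv_add_mul_le
    {w₀ w : ℂ} {r : ℝ} (hr : 0 < r) (hw : ‖w - w₀‖ ≤ r) {l : ℝ}
    (hl : Metric.closedBall ((l : ℂ) + w) r ⊆ horizontalStrip a b) (x : ℂ) :
    ‖deriv G (l + w) * x‖ ≤
      M * Real.exp (k * (|w₀.re| + 2 * r)) / r * (Real.exp (k * |l|) * ‖x‖) := by
  have hM : 0 ≤ M := nonneg_of_mul_nonneg_left
    ((norm_nonneg _).trans (hGb _ (hl (Metric.mem_closedBall_self hr.le)))) (Real.exp_pos _)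
  have hdG := norm_deriv_le_of_norm_le_exp hG hGb hk hr hl
  simp only [Complex.add_re, Complex.ofReal_re] at hdG
  have hre := abs_re_le_of_norm_sub_le hw
  rw [norm_mul]
  calc ‖deriv G (l + w)‖ * ‖x‖ ≤ M * Real.exp (k * (|l + w.re| + r)) / r * ‖x‖ := by
        gcongr
    _ ≤ M * Real.exp (k * |l| + k * (|w₀.re| + 2 * r)) / r * ‖x‖ := by
        gcongr
        rw [← mul_add]
        exact mul_le_mul_of_nonneg_left (by linarith [abs_add_le l w.re]) hk
    _ = M * Real.exp (k * (|w₀.re| + 2 * r)) / r * (Real.exp (k * |l|) * ‖x‖) := by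
        rw [Real.exp_add]
        ring

variable (hc : Continuous c) (hci : Integrable fun l : ℝ => Real.exp (k * |l|) * ‖c l‖)
include hc hci

lemma integrable_mul_translate {w : ℂ} (hw : w ∈ horizontalStrip a b) :
    Integrable fun l : ℝ => G (l + w) * c l := by
  have hM : 0 ≤ M := nonneg_of_mul_nonneg_left ((norm_nonneg _).trans (hGb w hw))
    (Real.exp_pos _)
  refine (hci.const_mul (M * Real.exp (k * |w.re|))).mono' ?_ (ae_of_all _ fun l => ?_)
  · exact ((hG.continuousOn.comp_continuous (by fun_prop)
      (ofReal_add_mem_horizontalStrip hw)).mul hc).aestronglyMeasurable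
  · have hGl := hGb _ (ofReal_add_mem_horizontalStrip hw l)
    simp only [Complex.add_re, Complex.ofReal_re] at hGl
    rw [norm_mul]
    calc ‖G (l + w)‖ * ‖c l‖ ≤ M * Real.exp (k * |l + w.re|) * ‖c l‖ := by gcongr
      _ ≤ M * (Real.exp (k * |l|) * Real.exp (k * |w.re|)) * ‖c l‖ := by
        gcongr
        exact exp_mul_abs_add_le hk l w.re
      _ = M * Real.exp (k * |w.re|) * (Real.exp (k * |l|) * ‖c l‖) := by ring

lemma hasDerivAt_integral_mul_translate {w₀ : ℂ} (hw₀ : w₀ ∈ horizontalStrip a b) :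
    HasDerivAt (fun w => ∫ l : ℝ, G (l + w) * c l) (∫ l : ℝ, deriv G (l + w₀) * c l) w₀ := by
  obtain ⟨ha, hb⟩ := hw₀
  obtain ⟨r, hr, hr₁, hr₂⟩ : ∃ r > 0, 3 * r ≤ w₀.im - a ∧ 3 * r ≤ b - w₀.im :=
    ⟨min (w₀.im - a) (b - w₀.im) / 3,
      by have := lt_min (sub_pos.2 ha) (sub_pos.2 hb); positivity,
      by linarith [min_le_left (w₀.im - a) (b - w₀.im)],
      by linarith [min_le_right (w₀.im - a) (b - w₀.im)]⟩
  have hball : ∀ w ∈ Metric.ball w₀ r, ∀ l : ℝ,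
      Metric.closedBall ((l : ℂ) + w) r ⊆ horizontalStrip a b := by
    intro w hw l
    have h := (Complex.abs_im_le_norm (w - w₀)).trans (mem_ball_iff_norm.1 hw).le
    rw [Complex.sub_im, abs_le] at h
    apply closedBall_subset_horizontalStrip <;>
      simp only [Complex.add_im, Complex.ofReal_im, zero_add] <;> linarith
  have hmem : ∀ w ∈ Metric.ball w₀ r, w ∈ horizontalStrip a b := fun w hw => by
    simpa using hball w hw 0 (Metric.mem_closedBall_self hr.le)
  refine (hasDerivAt_integral_of_dominated_loc_of_deriv_le
    (F := fun w (l : ℝ) => G (l + w) * c l) (F' := fun w (l : ℝ) => deriv G (l + w) * c l)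
    (bound := fun l =>
      M * Real.exp (k * (|w₀.re| + 2 * r)) / r * (Real.exp (k * |l|) * ‖c l‖))
    (Metric.ball_mem_nhds w₀ hr) ?_ ?_ ?_ ?_ (hci.const_mul _) ?_).2
  · filter_upwards [Metric.ball_mem_nhds w₀ hr] with w hw
    exact (integrable_mul_translate hG hGb hk hc hci (hmem w hw)).aestronglyMeasurable
  · exact integrable_mul_translate hG hGb hk hc hci ⟨ha, hb⟩
  · exact (((measurable_deriv G).comp (by fun_prop)).aestronglyMeasurable).mul
      hc.aestronglyMeasurable
  · exact ae_of_all _ fun l w hw =>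
      norm_deriv_add_mul_le hG hGb hk hr (mem_ball_iff_norm.1 hw).le (hball w hw l) (c l)
  · refine ae_of_all _ fun l w hw => ?_
    have hGd := (hG.differentiableAt ((isOpen_horizontalStrip a b).mem_nhds
      (ofReal_add_mem_horizontalStrip (hmem w hw) l))).hasDerivAt
    simpa using (hGd.comp_const_add (l : ℂ) w).mul_const (c l)

lemma differentiableOn_integral_mul_translate :
    DifferentiableOn ℂ (fun w => ∫ l : ℝ, G (l + w) * c l) (horizontalStrip a b) :=
  fun _ hw => (hasDerivAt_integral_mul_translate hG hGb hk hc hci hw).differentiableAt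
    |>.differentiableWithinAt

end IntegralOfTranslates

lemma sinhc_eq_dslope : sinhc = dslope Complex.sinh 0 := by
  funext z
  rcases eq_or_ne z 0 with rfl | hz
  · simp [sinhc]
  · rw [dslope_of_ne _ hz, slope_def_field, sinhc, if_neg hz]
    simp

lemma differentiable_sinhc : Differentiable ℂ sinhc := by
  rw [sinhc_eq_dslope, ← differentiableOn_univ, Complex.differentiableOn_dslope univ_mem]
  exact Complex.differentiable_sinh.differentiableOn

lemma sinhc_ofReal (l : ℝ) : sinhc l = shc l := by
  rcases eq_or_ne l 0 with rfl | hl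
  · simp [sinhc, shc]
  · simp [sinhc, shc, hl, Complex.ofReal_sinh]

lemma shc_pos (l : ℝ) : 0 < shc l := by
  rcases eq_or_ne l 0 with rfl | hl
  · simp [shc]
  · rw [shc, if_neg hl]
    rcases hl.lt_or_gt with hl | hl
    · exact div_pos_of_neg_of_neg (Real.sinh_neg_iff.2 hl) hl
    · exact div_pos (Real.sinh_pos_iff.2 hl) hl

lemma Complex.re_sinh (z : ℂ) : (Complex.sinh z).re = Real.sinh z.re * Real.cos z.im := by
  simp [Complex.sinh, Complex.exp_re, Real.sinh_eq]
  ring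

lemma Complex.im_sinh (z : ℂ) : (Complex.sinh z).im = Real.cosh z.re * Real.sin z.im := by
  simp [Complex.sinh, Complex.exp_im, Real.cosh_eq]
  ring

lemma Real.self_mul_sinh_nonneg (x : ℝ) : 0 ≤ x * Real.sinh x := by
  rcases le_total 0 x with hx | hx
  · exact mul_nonneg hx (Real.sinh_nonneg_iff.2 hx)
  · exact mul_nonneg_of_nonpos_of_nonpos hx (Real.sinh_nonpos_iff.2 hx)

lemma Real.self_mul_sinh_pos {x : ℝ} (hx : x ≠ 0) : 0 < x * Real.sinh x := by
  rcases hx.lt_or_gt with hx | hx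
  · exact mul_pos_of_neg_of_neg hx (Real.sinh_neg_iff.2 hx)
  · exact mul_pos hx (Real.sinh_pos_iff.2 hx)

lemma Real.self_mul_sin_pos {y : ℝ} (hy : y ≠ 0) (hyπ : |y| < Real.pi) : 0 < y * Real.sin y := by
  have h : y * Real.sin y = |y| * Real.sin |y| := by
    rcases le_total 0 y with h | h
    · rw [abs_of_nonneg h]
    · rw [abs_of_nonpos h, Real.sin_neg, neg_mul_neg]
  rw [h]
  exact mul_pos (abs_pos.2 hy) (Real.sin_pos_of_pos_of_lt_pi (abs_pos.2 hy) hyπ)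

lemma sinhc_mem_slitPlane {z : ℂ} (hz : |z.im| < Real.pi) : sinhc z ∈ Complex.slitPlane := by
  rcases eq_or_ne z 0 with rfl | hz0
  · simp [sinhc]
  have hN : 0 < Complex.normSq z := Complex.normSq_pos.2 hz0
  rw [sinhc, if_neg hz0, Complex.mem_slitPlane_iff, Complex.div_re, Complex.div_im,
    Complex.re_sinh, Complex.im_sinh, ← add_div, ← sub_div, div_ne_zero_iff]
  set x := z.re
  set y := z.im
  have hxy : x ≠ 0 ∨ y ≠ 0 := by
    by_contra! h
    exact hz0 (Complex.ext h.1 h.2)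
  have hcosh := Real.cosh_pos x
  rcases le_or_gt 0 (Real.cos y) with hcos | hcos
  · refine .inl (div_pos ?_ hN)
    rcases eq_or_ne y 0 with hy | hy
    · have hx := Real.self_mul_sinh_pos (hxy.resolve_right (not_not.2 hy))
      simp only [hy, Real.cos_zero, Real.sin_zero]
      linarith
    · have := Real.self_mul_sin_pos hy hz
      nlinarith [Real.self_mul_sinh_nonneg x]
  · have hy : y ≠ 0 := fun h => by rw [h, Real.cos_zero] at hcos; linarith
    have hy' := Real.self_mul_sin_pos hy hz
    rcases eq_or_ne x 0 with hx | hx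
    · refine .inl (div_pos ?_ hN)
      simp only [hx, Real.sinh_zero, Real.cosh_zero]
      linarith
    -- `cos y < 0` gives the two terms of the imaginary part the same nonzero sign
    · refine .inr ⟨fun h => ?_, hN.ne'⟩
      have hx' := Real.self_mul_sinh_pos hx
      have hprod : Real.cosh x * Real.sin y * x * (Real.sinh x * Real.cos y * y) < 0 := by
        have : 0 < x * Real.sinh x * (y * Real.sin y) * Real.cosh x := by positivity
        nlinarith
      rw [sub_eq_zero.1 h] at hprod
      exact (mul_self_nonneg _).not_gt hprod

lemma Complex.norm_sinh_le_exp_abs_re (z : ℂ) : ‖Complex.sinh z‖ ≤ Real.exp |z.re| := by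
  have h₁ : Real.exp z.re ≤ Real.exp |z.re| := Real.exp_le_exp.2 (le_abs_self _)
  have h₂ : Real.exp (-z.re) ≤ Real.exp |z.re| := Real.exp_le_exp.2 (neg_le_abs _)
  have h := norm_sub_le (Complex.exp z) (Complex.exp (-z))
  rw [Complex.norm_exp, Complex.norm_exp, Complex.neg_re] at h
  rw [Complex.sinh, norm_div, Complex.norm_two]
  linarith

lemma Complex.norm_cosh_le_exp_abs_re (z : ℂ) : ‖Complex.cosh z‖ ≤ Real.exp |z.re| := by
  have h₁ : Real.exp z.re ≤ Real.exp |z.re| := Real.exp_le_exp.2 (le_abs_self _)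
  have h₂ : Real.exp (-z.re) ≤ Real.exp |z.re| := Real.exp_le_exp.2 (neg_le_abs _)
  have h := norm_add_le (Complex.exp z) (Complex.exp (-z))
  rw [Complex.norm_exp, Complex.norm_exp, Complex.neg_re] at h
  rw [Complex.cosh, norm_div, Complex.norm_two]
  linarith

lemma exists_norm_sinhc_le : ∃ C, ∀ z, ‖sinhc z‖ ≤ C * Real.exp |z.re| := by
  obtain ⟨B, hB⟩ := (isCompact_closedBall (0 : ℂ) 1).exists_bound_of_continuousOn
    differentiable_sinhc.continuous.continuousOn
  refine ⟨max B 1, fun z => ?_⟩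
  have he : 1 ≤ Real.exp |z.re| := Real.one_le_exp (abs_nonneg _)
  have hC : 1 ≤ max B 1 := le_max_right B 1
  rcases le_or_gt ‖z‖ 1 with hz | hz
  · calc ‖sinhc z‖ ≤ B := hB z (mem_closedBall_zero_iff.2 hz)
      _ ≤ max B 1 := le_max_left B 1
      _ ≤ max B 1 * Real.exp |z.re| := le_mul_of_one_le_right (by linarith) he
  · have hz0 : z ≠ 0 := by rintro rfl; norm_num at hz
    rw [sinhc, if_neg hz0, norm_div]
    calc ‖Complex.sinh z‖ / ‖z‖ ≤ ‖Complex.sinh z‖ := div_le_self (norm_nonneg _) hz.le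
      _ ≤ Real.exp |z.re| := Complex.norm_sinh_le_exp_abs_re z
      _ ≤ max B 1 * Real.exp |z.re| := le_mul_of_one_le_left (by positivity) hC

def sqrtSinhcMulCosh (z : ℂ) : ℂ := sinhc z ^ ((1 : ℂ) / 2) * Complex.cosh z

def coshWeight (n : ℕ) (l : ℝ) : ℂ := Complex.cosh (l : ℂ) ^ (-(n : ℂ) - 3 / 2)

lemma An_eq_integral (n : ℕ) (w : ℂ) :
    An n w = ∫ l : ℝ, sqrtSinhcMulCosh (l + w) * coshWeight n l := rfl

lemma exists_norm_sqrtSinhcMulCosh_le :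
    ∃ M, ∀ z, ‖sqrtSinhcMulCosh z‖ ≤ M * Real.exp (3 / 2 * |z.re|) := by
  obtain ⟨C, hC⟩ := exists_norm_sinhc_le
  have hC0 : 0 ≤ C := nonneg_of_mul_nonneg_left ((norm_nonneg _).trans (hC 0)) (Real.exp_pos _)
  refine ⟨C ^ (1 / 2 : ℝ), fun z => ?_⟩
  rw [sqrtSinhcMulCosh, norm_mul, show (1 / 2 : ℂ) = ((1 / 2 : ℝ) : ℂ) by norm_num,
    Complex.norm_cpow_real]
  calc ‖sinhc z‖ ^ (1 / 2 : ℝ) * ‖Complex.cosh z‖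
      ≤ (C * Real.exp |z.re|) ^ (1 / 2 : ℝ) * Real.exp |z.re| := by
        gcongr
        exacts [hC z, Complex.norm_cosh_le_exp_abs_re z]
    _ = C ^ (1 / 2 : ℝ) * Real.exp (3 / 2 * |z.re|) := by
        rw [Real.mul_rpow hC0 (Real.exp_pos _).le, ← Real.exp_mul, mul_assoc, ← Real.exp_add]
        ring_nf

lemma differentiableOn_sqrtSinhcMulCosh :
    DifferentiableOn ℂ sqrtSinhcMulCosh (horizontalStrip (-Real.pi) Real.pi) := fun z hz =>
  ((differentiable_sinhc z).cpow (differentiableAt_const _) (sinhc_mem_slitPlane (abs_lt.2 hz))).mul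
    (Complex.differentiable_cosh z) |>.differentiableWithinAt

lemma coshWeight_eq (n : ℕ) (l : ℝ) :
    coshWeight n l = ((Real.cosh l ^ (-(n : ℝ) - 3 / 2) : ℝ) : ℂ) := by
  rw [coshWeight, ← Complex.ofReal_cosh, Complex.ofReal_cpow (Real.cosh_pos l).le]
  push_cast
  ring_nf

lemma continuous_coshWeight (n : ℕ) : Continuous (coshWeight n) := by
  simp_rw [funext (coshWeight_eq n)]
  exact Complex.continuous_ofReal.comp
    (Real.continuous_cosh.rpow_const fun l => .inl (Real.cosh_pos l).ne')

lemma norm_coshWeight (n : ℕ) (l : ℝ) :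
    ‖coshWeight n l‖ = Real.cosh l ^ (-(n : ℝ) - 3 / 2) := by
  rw [coshWeight_eq, Complex.norm_real, Real.norm_of_nonneg (by positivity)]

lemma abs_sub_log_two_le_log_cosh (l : ℝ) : |l| - Real.log 2 ≤ Real.log (Real.cosh l) := by
  have h : Real.exp |l| / 2 ≤ Real.cosh l := by
    rw [← Real.cosh_abs, Real.cosh_eq]
    linarith [Real.exp_pos (-|l|)]
  calc |l| - Real.log 2 = Real.log (Real.exp |l| / 2) := by
        rw [Real.log_div (Real.exp_pos _).ne' two_ne_zero, Real.log_exp]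
    _ ≤ Real.log (Real.cosh l) := Real.log_le_log (by positivity) h

lemma integrable_exp_mul_abs {a : ℝ} (ha : a < 0) :
    Integrable fun x : ℝ => Real.exp (a * |x|) := by
  by_contra h
  have := integral_comp_abs (f := fun x => Real.exp (a * x))
  rw [integral_undef h, integral_exp_mul_Ioi ha, mul_zero, Real.exp_zero] at this
  have : (0 : ℝ) < 2 * (-1 / a) := by
    have := div_pos_of_neg_of_neg (neg_one_lt_zero) ha
    positivity
  linarith

lemma integrable_exp_mul_abs_mul_norm_coshWeight {n : ℕ} (hn : 1 ≤ n) :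
    Integrable fun l : ℝ => Real.exp (3 / 2 * |l|) * ‖coshWeight n l‖ := by
  have hn' : (0 : ℝ) < n := by exact_mod_cast hn
  refine ((integrable_exp_mul_abs (neg_lt_zero.2 hn')).const_mul
    (Real.exp ((n + 3 / 2) * Real.log 2))).mono'
    ((by fun_prop : Continuous fun l : ℝ => Real.exp (3 / 2 * |l|)).mul
      (continuous_coshWeight n).norm).aestronglyMeasurable (ae_of_all _ fun l => ?_)
  have hL := abs_sub_log_two_le_log_cosh l
  rw [Real.norm_of_nonneg (by positivity), norm_coshWeight,
    Real.rpow_def_of_pos (Real.cosh_pos l), ← Real.exp_add, ← Real.exp_add]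
  exact Real.exp_le_exp.2 (by nlinarith)

lemma differentiableOn_An {n : ℕ} (hn : 1 ≤ n) :
    DifferentiableOn ℂ (An n) (horizontalStrip (-Real.pi) Real.pi) := by
  obtain ⟨M, hM⟩ := exists_norm_sqrtSinhcMulCosh_le
  simp_rw [funext (An_eq_integral n)]
  exact differentiableOn_integral_mul_translate differentiableOn_sqrtSinhcMulCosh
    (fun z _ => hM z) (by norm_num) (continuous_coshWeight n)
    (integrable_exp_mul_abs_mul_norm_coshWeight hn)

lemma sqrtSinhcMulCosh_mul_coshWeight_ofReal (n : ℕ) (l : ℝ) :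
    sqrtSinhcMulCosh l * coshWeight n l =
      ((shc l ^ (1 / 2 : ℝ) * Real.cosh l * Real.cosh l ^ (-(n : ℝ) - 3 / 2) : ℝ) : ℂ) := by
  rw [sqrtSinhcMulCosh, coshWeight_eq, sinhc_ofReal, ← Complex.ofReal_cosh,
    show (1 / 2 : ℂ) = ((1 / 2 : ℝ) : ℂ) by norm_num, ← Complex.ofReal_cpow (shc_pos l).le]
  push_cast
  ring

lemma re_An_zero_pos {n : ℕ} (hn : 1 ≤ n) : 0 < (An n 0).re := by
  obtain ⟨M, hM⟩ := exists_norm_sqrtSinhcMulCosh_le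
  have hint := integrable_mul_translate differentiableOn_sqrtSinhcMulCosh (fun z _ => hM z)
    (by norm_num) (continuous_coshWeight n) (integrable_exp_mul_abs_mul_norm_coshWeight hn)
    (w := 0) ⟨neg_lt_zero.2 Real.pi_pos, Real.pi_pos⟩
  simp only [add_zero, sqrtSinhcMulCosh_mul_coshWeight_ofReal] at hint
  rw [An_eq_integral]
  simp only [add_zero, sqrtSinhcMulCosh_mul_coshWeight_ofReal]
  rw [integral_complex_ofReal, Complex.ofReal_re]
  have hpos (l : ℝ) :
      0 < shc l ^ (1 / 2 : ℝ) * Real.cosh l * Real.cosh l ^ (-(n : ℝ) - 3 / 2) := by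
    have := shc_pos l
    have := Real.cosh_pos l
    positivity
  refine (integral_pos_iff_support_of_nonneg (fun l => (hpos l).le) (by simpa using hint.re)).2 ?_
  rw [show Function.support _ = univ from eq_univ_of_forall fun l => (hpos l).ne']
  simp

lemma AnalyticOnNhd.finite_inter_zeros_of_isCompact {𝕜 E : Type*} [NontriviallyNormedField 𝕜]
    [NormedAddCommGroup E] [NormedSpace 𝕜 E] {f : 𝕜 → E} {U K : Set 𝕜}
    (hf : AnalyticOnNhd 𝕜 f U) (hU : IsConnected U) {x₀ : 𝕜} (hx₀ : x₀ ∈ U) (hfx₀ : f x₀ ≠ 0)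
    (hK : IsCompact K) (hKU : K ⊆ U) : (K ∩ f ⁻¹' {0}).Finite := by
  have h := hK.finite_sdiff_of_mem_codiscreteWithin
    (codiscreteWithin_mono hKU (hf.preimage_zero_mem_codiscreteWithin hfx₀ hx₀ hU))
  rwa [preimage_compl, sdiff_compl] at h

theorem stmt14 (n : ℕ) (hn : 1 ≤ n) :
    {φ : ℝ | φ ∈ Set.Icc (-(Real.pi / 2)) (Real.pi / 2) ∧
      An n (Complex.I * φ) = 0}.Finite := by
  have hπ := Real.pi_pos
  have h0 : (0 : ℂ) ∈ horizontalStrip (-Real.pi) Real.pi := ⟨neg_lt_zero.2 hπ, hπ⟩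
  set ι : ℝ → ℂ := fun φ => Complex.I * φ
  have hK : IsCompact (ι '' Icc (-(Real.pi / 2)) (Real.pi / 2)) :=
    isCompact_Icc.image (by fun_prop)
  have hKU : ι '' Icc (-(Real.pi / 2)) (Real.pi / 2) ⊆ horizontalStrip (-Real.pi) Real.pi := by
    rintro _ ⟨φ, hφ, rfl⟩
    simp only [horizontalStrip, mem_preimage, mem_Ioo, ι, Complex.mul_im, Complex.I_re,
      Complex.I_im, Complex.ofReal_re, Complex.ofReal_im]
    constructor <;> linarith [hφ.1, hφ.2]
  have hfin := ((differentiableOn_An hn).analyticOnNhd (isOpen_horizontalStrip _ _))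
    |>.finite_inter_zeros_of_isCompact ((convex_horizontalStrip _ _).isConnected ⟨0, h0⟩) h0
      (fun h => (re_An_zero_pos hn).ne' (by rw [h, Complex.zero_re])) hK hKU
  refine (hfin.preimage (mul_right_injective₀ Complex.I_ne_zero
    |>.comp Complex.ofReal_injective).injOn).subset ?_
  rintro φ ⟨hφ, hAφ⟩
  exact ⟨mem_image_of_mem ι hφ, hAφ⟩
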